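/- Let Φ ∈ ℂ^{M×M} with I + Φ invertible, a₀ > 0, and A = a₀(I − Φ)(I + Φ)⁻¹. If ΦΦᴴ ⪯ I then A + Aᴴ ⪰ 0. -/

import Mathlib

open Matrix ComplexOrder

lemma psd_smul_aux {M : ℕ} (c : ℝ) (hc : 0 ≤ c) {B : Matrix (Fin M) (Fin M) ℂ}
    (hB : B.PosSemidef) : ((c : ℂ) • B).PosSemidef := by
  refine PosSemidef.of_dotProduct_mulVec_nonneg ?_ (fun x => ?_)
  · unfold Matrix.IsHermitian
    rw [conjTranspose_smul, hB.1.eq]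
    congr 1
    simp
  · rw [smul_mulVec, dotProduct_smul, smul_eq_mul]
    exact mul_nonneg (by exact_mod_cast hc) (hB.dotProduct_mulVec_nonneg x)

theorem stmt_4 (M : ℕ) (Φ : Matrix (Fin M) (Fin M) ℂ)
    (h1 : IsUnit ((1 : Matrix (Fin M) (Fin M) ℂ) + Φ))
    (a₀ : ℝ) (ha : 0 < a₀)
    (A : Matrix (Fin M) (Fin M) ℂ)
    (hA : A = (a₀ : ℂ) • ((1 - Φ) * ((1 : Matrix (Fin M) (Fin M) ℂ) + Φ)⁻¹))
    (hΦ : (1 - Φ * Φᴴ).PosSemidef) :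
    (A + Aᴴ).PosSemidef := by
  set C := ((1 : Matrix (Fin M) (Fin M) ℂ) + Φ)⁻¹ with hC
  have hdet : IsUnit ((1 : Matrix (Fin M) (Fin M) ℂ) + Φ).det :=
    (Matrix.isUnit_iff_isUnit_det _).mp h1
  have hmul : ((1 : Matrix (Fin M) (Fin M) ℂ) + Φ) * C = 1 := Matrix.mul_nonsing_inv _ hdet
  have hmul' : C * ((1 : Matrix (Fin M) (Fin M) ℂ) + Φ) = 1 := Matrix.nonsing_inv_mul _ hdet
  have hmulH : (1 + Φᴴ) * Cᴴ = 1 := by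
    have := congrArg conjTranspose hmul'
    simpa using this
  have hmulH' : Cᴴ * (1 + Φᴴ) = 1 := by
    have := congrArg conjTranspose hmul
    simpa using this
  -- commute: (1 - Φ) * C = C * (1 - Φ)
  have hcomm : (1 - Φ) * C = C * (1 - Φ) := by
    have h3 : (1 + Φ) * (1 - Φ) = (1 - Φ) * (1 + Φ) := by noncomm_ring
    calc (1 - Φ) * C
        = C * ((1 + Φ) * ((1 - Φ) * C)) := by
          rw [← Matrix.mul_assoc, hmul', Matrix.one_mul]
      _ = C * (1 - Φ) := by
          rw [← Matrix.mul_assoc (1 + Φ), h3, Matrix.mul_assoc, hmul, Matrix.mul_one]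
  have key : A + Aᴴ = ((2 * a₀ : ℝ) : ℂ) • (C * (1 - Φ * Φᴴ) * Cᴴ) := by
    rw [hA, conjTranspose_smul]
    have hsa : star ((a₀ : ℝ) : ℂ) = ((a₀ : ℝ) : ℂ) := by simp
    rw [hsa, ← smul_add]
    have : (1 - Φ) * C + ((1 - Φ) * C)ᴴ = (2 : ℂ) • (C * (1 - Φ * Φᴴ) * Cᴴ) := by
      rw [hcomm]
      have hT : (C * (1 - Φ))ᴴ = (1 - Φᴴ) * Cᴴ := by
        simp [conjTranspose_mul]
      rw [hT]
      have e1 : C * (1 - Φ) = C * ((1 - Φ) * ((1 + Φᴴ) * Cᴴ)) := by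
        rw [hmulH, Matrix.mul_one]
      have e2 : (1 - Φᴴ) * Cᴴ = C * ((1 + Φ) * ((1 - Φᴴ) * Cᴴ)) := by
        rw [← Matrix.mul_assoc, ← Matrix.mul_assoc, hmul', Matrix.one_mul]
      rw [e1, e2]
      have e3 : (1 - Φ) * ((1 + Φᴴ) * Cᴴ) + (1 + Φ) * ((1 - Φᴴ) * Cᴴ)
          = ((2 : ℂ) • (1 - Φ * Φᴴ)) * Cᴴ := by
        rw [← Matrix.mul_assoc, ← Matrix.mul_assoc, ← Matrix.add_mul]
        congr 1
        rw [two_smul]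
        noncomm_ring
      rw [← Matrix.mul_add, e3, Matrix.smul_mul, Matrix.mul_smul, Matrix.mul_assoc]
    rw [this, smul_smul]
    congr 1
    push_cast
    ring
  rw [key]
  exact psd_smul_aux (2 * a₀) (by linarith) (hΦ.mul_mul_conjTranspose_same C)
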